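/- arXiv:1303.1346 — 3 statements merged into one kernel-verified Lean document; each statement's English description precedes it below -/
import Mathlib

section
/- Let F = FreeGroup ℕ with generators x_0, x_1, x_2, ..., let φ : F →* F be the homomorphism determined by φ(x_0) = x_0 and φ(x_{i+1}) = x_i * x_{i+1}, and let c ≥ 1. Then the endomorphism φ'_c induced by φ on the free metabelian c-step nilpotent group M_{∞,c} = F ⧸ (γ_{c+1}(F) ⊔ F^{(2)}) of countable rank is bijective and has exactly one Reidemeister class: every g ∈ M_{∞,c} can be written g = z * φ'_c(z)⁻¹ for some z. In particular M_{∞,c} does not have property R_∞. -/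
/-- Two elements `x y : G` are Reidemeister equivalent with respect to an
endomorphism `φ` of `G` if `x = z * y * (φ z)⁻¹` for some `z : G`. -/
def ReidemeisterRel {G : Type*} [Group G] (φ : G →* G) (x y : G) : Prop :=
  ∃ z : G, x = z * y * (φ z)⁻¹

/-- The set (type) of Reidemeister classes of an endomorphism `φ` of a group `G`. -/
def ReidemeisterClasses {G : Type*} [Group G] (φ : G →* G) : Type _ :=
  Quot (ReidemeisterRel φ)

/-- A group `G` has property `R_∞` if every automorphism of `G` has infinitely
many Reidemeister classes. -/
def PropertyRInfinity (G : Type*) [Group G] : Prop :=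
  ∀ φ : G ≃* G, Infinite (ReidemeisterClasses φ.toMonoidHom)

/-- The endomorphism `φ` of `F_∞ = FreeGroup ℕ` determined by `φ(x_0) = x_0` and
`φ(x_{i+1}) = x_i * x_{i+1}`. -/
noncomputable def phiFree : FreeGroup ℕ →* FreeGroup ℕ :=
  FreeGroup.lift fun i =>
    match i with
    | 0 => FreeGroup.of 0
    | Nat.succ j => FreeGroup.of j * FreeGroup.of (j + 1)

/-- The subgroup `γ_{c+1}(F_∞) ⊔ F_∞^{(2)}` is normal. -/
instance (c : ℕ) :
    ((⊤ : Subgroup (FreeGroup ℕ)).lowerCentralSeries c ⊔ derivedSeries (FreeGroup ℕ) 2).Normal :=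
  haveI : (derivedSeries (FreeGroup ℕ) 2).Normal := derivedSeries_normal _ _
  Subgroup.sup_normal _ _

/-- `φ` maps the fully invariant subgroup `γ_{c+1}(F_∞) ⊔ F_∞^{(2)}` into itself. -/
theorem phiFree_join_le (c : ℕ) :
    (⊤ : Subgroup (FreeGroup ℕ)).lowerCentralSeries c ⊔ derivedSeries (FreeGroup ℕ) 2 ≤
      ((⊤ : Subgroup (FreeGroup ℕ)).lowerCentralSeries c ⊔ derivedSeries (FreeGroup ℕ) 2).comap phiFree := by
  rw [← Subgroup.map_le_iff_le_comap, Subgroup.map_sup]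
  exact sup_le ((Subgroup.lowerCentralSeries.map phiFree c).trans le_sup_left)
    ((map_derivedSeries_le_derivedSeries phiFree 2).trans le_sup_right)

/-- The endomorphism `φ'_c` induced by `φ` on the free metabelian `c`-step nilpotent group
`M_{∞,c} = F_∞ / (γ_{c+1}(F_∞) ⊔ F_∞^{(2)})` of countable rank. -/
noncomputable def phiFreeMetabelianNilpotent (c : ℕ) :
    FreeGroup ℕ ⧸ ((⊤ : Subgroup (FreeGroup ℕ)).lowerCentralSeries c ⊔ derivedSeries (FreeGroup ℕ) 2) →*
      FreeGroup ℕ ⧸ ((⊤ : Subgroup (FreeGroup ℕ)).lowerCentralSeries c ⊔ derivedSeries (FreeGroup ℕ) 2) :=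
  QuotientGroup.map _ _ phiFree (phiFree_join_le c)

/-! On each graded piece `γ_{k+1}/γ_{k+2}` of the lower central series of `F`, written additively,
`D = 1 - φ` is onto. For `k = 0` this is `D x_{i+1} = -x_i`. The next piece is spanned by the
commutators `[y, x_m]`, and `φ[y, x_0] = [φ y, x_0]`, `φ[y, x_{m+1}] = [φ y, x_m] + [φ y, x_{m+1}]`;
writing `y = D w`, this gives `[D w, x_0] = D[w, x_0]` and
`[D w, x_{m+1}] = D[w, x_{m+1}] + [φ w, x_m]`, so by induction on `m` every `[y, x_m]` lies in the
image of `D`.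

Lifting solutions of `D v = y` layer by layer, every `g ∈ F` is congruent to `z φ(z)⁻¹` modulo
`γ_{c+1}(F)`. Hence `φ` has a single Reidemeister class on `F/γ_{c+1}(F)` and on its quotient
`M_{∞,c}`. Finally `φ` is an automorphism of `F` (`x_n ↦ ψ(x_{n-1})⁻¹ x_n` inverts it) and
`γ_{c+1}(F) ⊔ F^{(2)}` is characteristic, so `φ'_c` is bijective. -/

open scoped commutatorElement

-- `γ k` is `γ_{k+1}` in the usual 1-based numbering of the lower central series.
local notation "γ" => Subgroup.lowerCentralSeries (⊤ : Subgroup _)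

section LowerCentralSeries

variable {G H : Type*} [Group G] [Group H]

theorem commutatorElement_mem_lowerCentralSeries_succ {k : ℕ} {x : G} (hx : x ∈ γ k) (y : G) :
    ⁅x, y⁆ ∈ γ (k + 1) :=
  Subgroup.commutator_mem_commutator hx (Subgroup.mem_top y)

theorem mem_lowerCentralSeries_zero (x : G) : x ∈ γ 0 := Subgroup.mem_top x

theorem map_mem_lowerCentralSeries (f : G →* H) {k : ℕ} {x : G} (hx : x ∈ γ k) : f x ∈ γ k := by
  have : f x ∈ (γ k : Subgroup G).map f := ⟨x, hx, rfl⟩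
  rw [Subgroup.map_lowerCentralSeries] at this
  exact Subgroup.lowerCentralSeries_mono k le_top this

end LowerCentralSeries

def LowerCentralGraded (G : Type*) [Group G] (k : ℕ) : Type _ :=
  γ k ⧸ (γ (k + 1) : Subgroup G).subgroupOf (γ k)

namespace LowerCentralGraded

variable {G H : Type*} [Group G] [Group H] {k : ℕ}

instance : Group (LowerCentralGraded G k) := QuotientGroup.Quotient.group _

def mk (x : G) (hx : x ∈ γ k) : LowerCentralGraded G k := QuotientGroup.mk ⟨x, hx⟩

theorem mk_surjective (y : LowerCentralGraded G k) : ∃ x hx, mk x hx = y := by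
  obtain ⟨⟨x, hx⟩, rfl⟩ := QuotientGroup.mk_surjective y
  exact ⟨x, hx, rfl⟩

theorem mk_mul (x y : G) (hx : x ∈ γ k) (hy : y ∈ γ k) :
    mk (x * y) (mul_mem hx hy) = mk x hx * mk y hy := rfl

theorem mk_inv (x : G) (hx : x ∈ γ k) : mk x⁻¹ (inv_mem hx) = (mk x hx)⁻¹ := rfl

theorem mk_eq_one_iff (x : G) (hx : x ∈ γ k) : mk x hx = 1 ↔ x ∈ γ (k + 1) :=
  (QuotientGroup.eq_one_iff _).trans Subgroup.mem_subgroupOf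

theorem mk_eq_mk_iff (x y : G) (hx : x ∈ γ k) (hy : y ∈ γ k) :
    mk x hx = mk y hy ↔ x⁻¹ * y ∈ γ (k + 1) :=
  QuotientGroup.eq.trans Subgroup.mem_subgroupOf

theorem mk_conj (g x : G) (hx : x ∈ γ k) :
    mk (g * x * g⁻¹) (Subgroup.Normal.conj_mem inferInstance x hx g) = mk x hx := by
  rw [mk_eq_mk_iff, show (g * x * g⁻¹)⁻¹ * x = ⁅x⁻¹, g⁆⁻¹ by group]
  exact inv_mem (commutatorElement_mem_lowerCentralSeries_succ (inv_mem hx) g)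

instance : CommGroup (LowerCentralGraded G k) where
  mul_comm y z := by
    obtain ⟨x, hx, rfl⟩ := mk_surjective y
    obtain ⟨w, hw, rfl⟩ := mk_surjective z
    rw [← mk_mul, ← mk_mul, mk_eq_mk_iff, show (x * w)⁻¹ * (w * x) = ⁅w⁻¹, x⁻¹⁆ by group]
    exact commutatorElement_mem_lowerCentralSeries_succ (inv_mem hw) _

def map (f : G →* H) (k : ℕ) : LowerCentralGraded G k →* LowerCentralGraded H k :=
  QuotientGroup.lift _
    (MonoidHom.mk' (fun x => mk (f x.1) (map_mem_lowerCentralSeries f x.2)) fun x y => by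
      simp only [Subgroup.coe_mul, ← mk_mul]
      congr 1
      exact map_mul f _ _)
    fun x hx => (mk_eq_one_iff _ _).2
      (map_mem_lowerCentralSeries f (Subgroup.mem_subgroupOf.1 hx))

theorem map_mk (f : G →* H) (x : G) (hx : x ∈ γ k) :
    map f k (mk x hx) = mk (f x) (map_mem_lowerCentralSeries f hx) := rfl

def commutatorRight (p : G) (hp : p ∈ γ k) : G →* LowerCentralGraded G (k + 1) :=
  MonoidHom.mk' (fun g => mk ⁅p, g⁆ (commutatorElement_mem_lowerCentralSeries_succ hp g))
    fun g h => by
      rw [← mk_conj g ⁅p, h⁆, ← mk_mul]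
      congr 1
      group

def commutatorPairing (k : ℕ) : LowerCentralGraded G k →* G →* LowerCentralGraded G (k + 1) :=
  QuotientGroup.lift _
    (MonoidHom.mk' (fun p => commutatorRight p.1 p.2) fun p q => by
      ext g
      change mk _ _ = mk _ _ * mk _ _
      rw [mul_comm, ← mk_conj p.1 ⁅q.1, g⁆, ← mk_mul]
      congr 1
      simp only [Subgroup.coe_mul]
      group)
    fun p hp => by
      ext g
      exact (mk_eq_one_iff _ _).2
        (commutatorElement_mem_lowerCentralSeries_succ (Subgroup.mem_subgroupOf.1 hp) g)

theorem commutatorPairing_mk (p : G) (hp : p ∈ γ k) (g : G) :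
    commutatorPairing k (mk p hp) g =
      mk ⁅p, g⁆ (commutatorElement_mem_lowerCentralSeries_succ hp g) := rfl

theorem map_commutatorPairing (f : G →* H) (y : LowerCentralGraded G k) (g : G) :
    map f (k + 1) (commutatorPairing k y g) = commutatorPairing k (map f k y) (f g) := by
  obtain ⟨p, hp, rfl⟩ := mk_surjective y
  simp only [commutatorPairing_mk, map_mk]
  congr 1
  exact map_commutatorElement f p g

theorem eq_top_of_forall_mk_mem {S : Set G} (hS : Subgroup.closure S = ⊤)
    {M : Subgroup (LowerCentralGraded G 0)}
    (hM : ∀ s ∈ S, mk s (mem_lowerCentralSeries_zero s) ∈ M) : M = ⊤ := by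
  let mk₀ : G →* LowerCentralGraded G 0 :=
    MonoidHom.mk' (fun g => mk g (mem_lowerCentralSeries_zero g)) fun _ _ => rfl
  have hle : Subgroup.closure S ≤ M.comap mk₀ := (Subgroup.closure_le _).2 hM
  rw [hS] at hle
  refine eq_top_iff.2 fun y _ => ?_
  obtain ⟨x, hx, rfl⟩ := mk_surjective y
  exact hle (Subgroup.mem_top x)

theorem eq_top_of_forall_commutatorPairing_mem {S : Set G} (hS : Subgroup.closure S = ⊤)
    {M : Subgroup (LowerCentralGraded G (k + 1))}
    (hM : ∀ y, ∀ s ∈ S, commutatorPairing k y s ∈ M) : M = ⊤ := by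
  have hpair (y : LowerCentralGraded G k) (g : G) : commutatorPairing k y g ∈ M := by
    have hle : Subgroup.closure S ≤ M.comap (commutatorPairing k y) :=
      (Subgroup.closure_le _).2 (hM y)
    rw [hS] at hle
    exact hle (Subgroup.mem_top g)
  have hlift :
      (γ (k + 1) : Subgroup G) ≤ (M.comap (QuotientGroup.mk' _)).map (Subgroup.subtype _) :=
    Subgroup.commutator_le.2 fun p hp g _ => ⟨⟨_, _⟩, hpair (mk p hp) g, rfl⟩
  refine eq_top_iff.2 fun y _ => ?_
  obtain ⟨q, hq, rfl⟩ := mk_surjective y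
  obtain ⟨q', hq', rfl⟩ := hlift hq
  exact hq'

end LowerCentralGraded

open LowerCentralGraded

theorem exists_mul_inv_map_mem_lowerCentralSeries {G : Type*} [Group G] (f : G →* G) (c : ℕ)
    (hf : ∀ k < c, Function.Surjective fun y : LowerCentralGraded G k => y / map f k y) (g : G) :
    ∃ z, g⁻¹ * (z * (f z)⁻¹) ∈ γ c := by
  induction c with
  | zero => exact ⟨1, Subgroup.mem_top _⟩
  | succ c ih =>
    obtain ⟨z, hz⟩ := ih fun k hk => hf k (Nat.lt_succ_of_lt hk)
    obtain ⟨y, hy⟩ := hf c c.lt_succ_self (mk _ hz)⁻¹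
    obtain ⟨v, hv, rfl⟩ := mk_surjective y
    have hw : v * (f v)⁻¹ ∈ γ c := mul_mem hv (inv_mem (map_mem_lowerCentralSeries f hv))
    replace hy : mk _ hw = (mk _ hz)⁻¹ := by
      rw [← hy]; exact (div_eq_mul_inv (mk v hv) (map f c (mk v hv))).symm
    refine ⟨z * v, ?_⟩
    -- Modulo `γ (c + 1)` the correction `v (f v)⁻¹` commutes past `f z`.
    rw [show g⁻¹ * (z * v * (f (z * v))⁻¹) = g⁻¹ * (z * (f z)⁻¹) * (f z * (v * (f v)⁻¹) * (f z)⁻¹)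
      by rw [map_mul]; group]
    have hconj := Subgroup.Normal.conj_mem inferInstance _ hw (f z)
    refine (mk_eq_one_iff _ (mul_mem hz hconj)).1 ?_
    rw [mk_mul _ _ hz hconj, mk_conj _ _ hw, hy, mul_inv_cancel]

section Reidemeister

variable {G : Type*} [Group G]

theorem ReidemeisterClasses.subsingleton_of_forall_eq_mul_inv {φ : G →* G}
    (h : ∀ g, ∃ z, g = z * (φ z)⁻¹) :
    Subsingleton (ReidemeisterClasses φ) := by
  refine ⟨fun x y => Quot.induction_on₂ x y fun x y => Quot.sound ?_⟩
  obtain ⟨z₁, rfl⟩ := h x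
  obtain ⟨z₂, rfl⟩ := h y
  exact ⟨z₁ * z₂⁻¹, by rw [map_mul, map_inv]; group⟩

theorem not_propertyRInfinity_of_forall_eq_mul_inv (e : G ≃* G) (h : ∀ g, ∃ z, g = z * (e z)⁻¹) :
    ¬ PropertyRInfinity G := fun hR =>
  have := ReidemeisterClasses.subsingleton_of_forall_eq_mul_inv (φ := e.toMonoidHom) h
  not_finite_iff_infinite.2 (hR e) inferInstance

end Reidemeister

theorem phiFree_of_zero : phiFree (FreeGroup.of 0) = FreeGroup.of 0 := FreeGroup.lift_apply_of

theorem phiFree_of_succ (n : ℕ) :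
    phiFree (FreeGroup.of (n + 1)) = FreeGroup.of n * FreeGroup.of (n + 1) :=
  FreeGroup.lift_apply_of

def phiFreeInvOf : ℕ → FreeGroup ℕ
  | 0 => FreeGroup.of 0
  | n + 1 => (phiFreeInvOf n)⁻¹ * FreeGroup.of (n + 1)

noncomputable def phiFreeEquiv : FreeGroup ℕ ≃* FreeGroup ℕ :=
  phiFree.toMulEquiv (FreeGroup.lift phiFreeInvOf)
    (FreeGroup.ext_hom _ _ fun n => by
      cases n <;> simp [phiFree_of_zero, phiFree_of_succ, phiFreeInvOf])
    (FreeGroup.ext_hom _ _ fun n => by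
      induction n with
      | zero => simp [phiFreeInvOf, phiFree_of_zero]
      | succ n ih => simp_all [phiFreeInvOf, phiFree_of_succ])

theorem phiFreeMetabelianNilpotent_bijective (c : ℕ) :
    Function.Bijective (phiFreeMetabelianNilpotent c) := by
  have hN : ((⊤ : Subgroup (FreeGroup ℕ)).lowerCentralSeries c ⊔ derivedSeries (FreeGroup ℕ) 2).map
      phiFreeEquiv.toMonoidHom = _ :=
    Subgroup.characteristic_iff_map_eq.1 inferInstance _
  convert (QuotientGroup.congr _ _ phiFreeEquiv hN).bijective
  ext x
  induction x using QuotientGroup.induction_on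
  rfl

theorem surjective_div_map_phiFree (k : ℕ) :
    Function.Surjective fun y : LowerCentralGraded (FreeGroup ℕ) k => y / map phiFree k y := by
  suffices (MonoidHom.id (LowerCentralGraded (FreeGroup ℕ) k) / map phiFree k).range = ⊤ from
    MonoidHom.range_eq_top.1 this
  induction k with
  | zero =>
    refine eq_top_of_forall_mk_mem (FreeGroup.closure_range_of ℕ) ?_
    rintro _ ⟨n, rfl⟩
    refine inv_mem_iff.1 ⟨mk (FreeGroup.of (n + 1)) (mem_lowerCentralSeries_zero _), ?_⟩
    rw [MonoidHom.div_apply, MonoidHom.id_apply, map_mk, div_eq_mul_inv, ← mk_inv, ← mk_mul,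
      ← mk_inv]
    congr 1
    rw [phiFree_of_succ]
    group
  | succ k ih =>
    have hsurj := MonoidHom.range_eq_top.1 ih
    refine eq_top_of_forall_commutatorPairing_mem (FreeGroup.closure_range_of ℕ) ?_
    rintro y _ ⟨m, rfl⟩
    induction m generalizing y with
    | zero =>
      obtain ⟨w, rfl⟩ := hsurj y
      refine ⟨commutatorPairing k w (FreeGroup.of 0), ?_⟩
      simp only [MonoidHom.div_apply, MonoidHom.id_apply, map_div, map_commutatorPairing,
        phiFree_of_zero]
    | succ m ih' =>
      obtain ⟨w, rfl⟩ := hsurj y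
      convert mul_mem (MonoidHom.mem_range.2 ⟨commutatorPairing k w (FreeGroup.of (m + 1)), rfl⟩)
        (ih' (map phiFree k w)) using 1
      simp only [MonoidHom.div_apply, MonoidHom.id_apply, map_div, map_commutatorPairing,
        phiFree_of_succ, map_mul]
      rw [mul_comm (commutatorPairing k _ (FreeGroup.of m)), ← div_div, div_mul_cancel]

theorem phiFreeMetabelianNilpotent_exists_eq_mul_inv (c : ℕ)
    (g : FreeGroup ℕ ⧸ ((⊤ : Subgroup (FreeGroup ℕ)).lowerCentralSeries c ⊔
      derivedSeries (FreeGroup ℕ) 2)) :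
    ∃ z, g = z * (phiFreeMetabelianNilpotent c z)⁻¹ := by
  obtain ⟨g, rfl⟩ := QuotientGroup.mk_surjective g
  obtain ⟨z, hz⟩ := exists_mul_inv_map_mem_lowerCentralSeries phiFree c
    (fun k _ => surjective_div_map_phiFree k) g
  exact ⟨z, QuotientGroup.eq.2 (Subgroup.mem_sup_left hz)⟩

theorem freeMetabelianNilpotentInftyRank_not_propertyRInfinity_general (c : ℕ) :
    Function.Bijective (phiFreeMetabelianNilpotent c) ∧
    (∀ g : FreeGroup ℕ ⧸ ((⊤ : Subgroup (FreeGroup ℕ)).lowerCentralSeries c ⊔ derivedSeries (FreeGroup ℕ) 2),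
      ∃ z, g = z * (phiFreeMetabelianNilpotent c z)⁻¹) ∧
    ¬ PropertyRInfinity
        (FreeGroup ℕ ⧸ ((⊤ : Subgroup (FreeGroup ℕ)).lowerCentralSeries c ⊔ derivedSeries (FreeGroup ℕ) 2)) :=
  have hbij := phiFreeMetabelianNilpotent_bijective c
  ⟨hbij, phiFreeMetabelianNilpotent_exists_eq_mul_inv c,
    not_propertyRInfinity_of_forall_eq_mul_inv (MulEquiv.ofBijective _ hbij)
      (phiFreeMetabelianNilpotent_exists_eq_mul_inv c)⟩

/-- With `φ : F_∞ →* F_∞` determined by `φ(x_0) = x_0`, `φ(x_{i+1}) = x_i * x_{i+1}` and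
`c ≥ 1`: the induced endomorphism `φ'_c` of `M_{∞,c} = F_∞ / (γ_{c+1}(F_∞) ⊔ F_∞^{(2)})`
is bijective and has exactly one Reidemeister class (every `g` equals `z * (φ'_c z)⁻¹`
for some `z`), and consequently `M_{∞,c}` does not have property `R_∞`. -/
theorem freeMetabelianNilpotentInftyRank_not_propertyRInfinity (c : ℕ) (hc : 1 ≤ c) :
    Function.Bijective (phiFreeMetabelianNilpotent c) ∧
    (∀ g : FreeGroup ℕ ⧸ ((⊤ : Subgroup (FreeGroup ℕ)).lowerCentralSeries c ⊔ derivedSeries (FreeGroup ℕ) 2),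
      ∃ z, g = z * (phiFreeMetabelianNilpotent c z)⁻¹) ∧
    ¬ PropertyRInfinity
        (FreeGroup ℕ ⧸ ((⊤ : Subgroup (FreeGroup ℕ)).lowerCentralSeries c ⊔ derivedSeries (FreeGroup ℕ) 2)) :=
  freeMetabelianNilpotentInftyRank_not_propertyRInfinity_general c
end

section
/- There exists an automorphism φ of the free group F_∞ = FreeGroup ℕ of countably infinite rank with exactly one Reidemeister class, i.e., every v ∈ F_∞ can be written v = z * φ(z)⁻¹ for some z ∈ F_∞ (so R(φ) = 1). Hence F_∞ does not have property R_∞. -/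
/-!
Let `e₀, e₁, …` enumerate `F_∞` with each `eₙ` a word in `x₀, …, xₙ₋₁` only, and let `φ` send
`xₙ` to `eₙ⁻¹ xₙ`. Then `xₙ (φ xₙ)⁻¹ = eₙ`, so every element is `z (φ z)⁻¹` with `z` a generator.
Since `φ` is triangular (`φ xₙ ∈ ⟨x₀, …, xₙ₋₁⟩ xₙ`), it is an automorphism: it maps each
`⟨x₀, …, xₙ₋₁⟩` onto itself, which makes it surjective, and a triangular right inverse built the
same way makes it injective.
-/

open Function

theorem ReidemeisterClasses.subsingleton_of_forall_exists {G : Type*} [Group G] (φ : G →* G)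
    (h : ∀ v : G, ∃ z : G, v = z * (φ z)⁻¹) : Subsingleton (ReidemeisterClasses φ) := by
  have mk_eq_one (x : G) : Quot.mk (ReidemeisterRel φ) x = Quot.mk _ 1 := by
    obtain ⟨z, hz⟩ := h x
    exact Quot.sound ⟨z, by rwa [mul_one]⟩
  refine ⟨fun a b => ?_⟩
  induction a using Quot.ind with | mk x =>
  induction b using Quot.ind with | mk y =>
  rw [mk_eq_one x, mk_eq_one y]

theorem not_propertyRInfinity_of_forall_exists {G : Type*} [Group G] (φ : G ≃* G)
    (h : ∀ v : G, ∃ z : G, v = z * (φ z)⁻¹) : ¬ PropertyRInfinity G := fun hR =>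
  have := hR φ
  have := ReidemeisterClasses.subsingleton_of_forall_exists φ.toMonoidHom h
  not_finite (ReidemeisterClasses φ.toMonoidHom)

theorem Subgroup.exists_surjective_nat_forall_mem {G : Type*} [Group G] [Countable G]
    {H : ℕ → Subgroup G} (hH : Monotone H) (hcover : ∀ g : G, ∃ n, g ∈ H n) :
    ∃ e : ℕ → G, (∀ n, e n ∈ H n) ∧ Surjective e := by
  classical
  obtain ⟨f, hf⟩ := exists_surjective_nat G
  -- `e (pair k m) = f k` as soon as `f k ∈ H m`.
  refine ⟨fun n => if f n.unpair.1 ∈ H n then f n.unpair.1 else 1, fun n => ?_, fun g => ?_⟩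
  · dsimp only
    split_ifs with h
    exacts [h, one_mem _]
  · obtain ⟨k, rfl⟩ := hf g
    obtain ⟨m, hm⟩ := hcover (f k)
    have hmem : f k ∈ H (Nat.pair k m) := hH (Nat.right_le_pair k m) hm
    exact ⟨Nat.pair k m, by simp only [Nat.unpair_pair, if_pos hmem]⟩

namespace FreeGroup

noncomputable def initialSubgroup (n : ℕ) : Subgroup (FreeGroup ℕ) :=
  Subgroup.closure (of '' Set.Iio n)

theorem initialSubgroup_mono : Monotone initialSubgroup := fun _ _ h =>
  Subgroup.closure_mono (Set.image_mono (Set.Iio_subset_Iio h))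

theorem initialSubgroup_zero : initialSubgroup 0 = ⊥ := by
  simp [initialSubgroup]

theorem of_mem_initialSubgroup {k n : ℕ} (h : k < n) : of k ∈ initialSubgroup n :=
  Subgroup.subset_closure ⟨k, h, rfl⟩

theorem exists_mem_initialSubgroup (w : FreeGroup ℕ) : ∃ n, w ∈ initialSubgroup n := by
  induction w using FreeGroup.induction_on with
  | C1 => exact ⟨0, one_mem _⟩
  | of k => exact ⟨k + 1, of_mem_initialSubgroup k.lt_succ_self⟩
  | inv_of k _ => exact ⟨k + 1, inv_mem (of_mem_initialSubgroup k.lt_succ_self)⟩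
  | mul x y hx hy =>
    obtain ⟨n, hn⟩ := hx
    obtain ⟨m, hm⟩ := hy
    exact ⟨max n m, mul_mem (initialSubgroup_mono (le_max_left n m) hn)
      (initialSubgroup_mono (le_max_right n m) hm)⟩

noncomputable def triangularHom (u : ℕ → FreeGroup ℕ) : FreeGroup ℕ →* FreeGroup ℕ :=
  lift fun n => u n * of n

theorem triangularHom_of (u : ℕ → FreeGroup ℕ) (n : ℕ) :
    triangularHom u (of n) = u n * of n :=
  lift_apply_of

section Triangular

variable {u : ℕ → FreeGroup ℕ} (hu : ∀ n, u n ∈ initialSubgroup n)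
include hu

theorem initialSubgroup_le_map_triangularHom (n : ℕ) :
    initialSubgroup n ≤ (initialSubgroup n).map (triangularHom u) := by
  induction n with
  | zero => simp [initialSubgroup_zero]
  | succ n ih =>
    have ih' : initialSubgroup n ≤ (initialSubgroup (n + 1)).map (triangularHom u) :=
      ih.trans (Subgroup.map_mono (initialSubgroup_mono n.le_succ))
    rw [initialSubgroup, Subgroup.closure_le]
    rintro - ⟨k, hk, rfl⟩
    rcases Nat.lt_succ_iff_lt_or_eq.mp hk with hk | rfl
    · exact ih' (of_mem_initialSubgroup hk)
    · have hof : of k = (u k)⁻¹ * triangularHom u (of k) := by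
        rw [triangularHom_of, inv_mul_cancel_left]
      rw [hof]
      exact mul_mem (ih' (inv_mem (hu k))) ⟨of k, of_mem_initialSubgroup k.lt_succ_self, rfl⟩

theorem triangularHom_surjective : Surjective (triangularHom u) := fun w => by
  obtain ⟨n, hn⟩ := exists_mem_initialSubgroup w
  obtain ⟨z, -, hz⟩ := initialSubgroup_le_map_triangularHom hu n hn
  exact ⟨z, hz⟩

theorem exists_triangularHom_leftInverse :
    ∃ c : ℕ → FreeGroup ℕ, (∀ n, c n ∈ initialSubgroup n) ∧
      LeftInverse (triangularHom u) (triangularHom c) := by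
  have hpre (n : ℕ) : ∃ c ∈ initialSubgroup n, triangularHom u c = (u n)⁻¹ :=
    initialSubgroup_le_map_triangularHom hu n (inv_mem (hu n))
  choose c hc hcu using hpre
  have hcomp : (triangularHom u).comp (triangularHom c) = MonoidHom.id _ :=
    ext_hom _ _ fun n => by simp [triangularHom_of, hcu]
  exact ⟨c, hc, DFunLike.congr_fun hcomp⟩

theorem triangularHom_bijective : Bijective (triangularHom u) := by
  obtain ⟨c, hc, hleft⟩ := exists_triangularHom_leftInverse hu
  exact ⟨(hleft.rightInverse_of_surjective (triangularHom_surjective hc)).injective,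
    triangularHom_surjective hu⟩

noncomputable def triangularEquiv : FreeGroup ℕ ≃* FreeGroup ℕ :=
  MulEquiv.ofBijective (triangularHom u) (triangularHom_bijective hu)

theorem triangularEquiv_of (n : ℕ) : triangularEquiv hu (of n) = u n * of n :=
  triangularHom_of u n

end Triangular

end FreeGroup

open FreeGroup in
/-- There exists an automorphism `φ` of the free group `F_∞ = FreeGroup ℕ` of countably
infinite rank with exactly one Reidemeister class: every `v` equals `z * (φ z)⁻¹` for some
`z`. Hence `F_∞` does not have property `R_∞`. -/
theorem freeGroupNat_not_propertyRInfinity :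
    (∃ φ : FreeGroup ℕ ≃* FreeGroup ℕ,
      ∀ v : FreeGroup ℕ, ∃ z : FreeGroup ℕ, v = z * (φ z)⁻¹) ∧
    ¬ PropertyRInfinity (FreeGroup ℕ) := by
  obtain ⟨e, he, he_surj⟩ :=
    Subgroup.exists_surjective_nat_forall_mem initialSubgroup_mono exists_mem_initialSubgroup
  let φ := triangularEquiv (u := fun n => (e n)⁻¹) fun n => inv_mem (he n)
  have hφ (v : FreeGroup ℕ) : ∃ z, v = z * (φ z)⁻¹ := by
    obtain ⟨n, rfl⟩ := he_surj v
    exact ⟨of n, by rw [triangularEquiv_of, mul_inv_rev, inv_inv, mul_inv_cancel_left]⟩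
  exact ⟨⟨φ, hφ⟩, not_propertyRInfinity_of_forall_exists φ hφ⟩
end

section
/- Let n > 1 be an integer and let p(x) = x^n + a_{n−1}x^{n−1} + ... + a_2 x^2 + a_1 x + (−1)^{n+1} be a polynomial with integer coefficients a_1, ..., a_{n−1} satisfying |a_{n−1}| > |a_{n−2}| + ... + |a_2| + |a_1| + 2. Then p is irreducible over ℚ. -/
/-!
A complex root `w` of `f = X^(m+1) + c_m X^m + ⋯ + c_0` with `|w| ≥ 1` satisfies
`|w| |w + c_m| ≤ F := |c_{m-1}| + ⋯ + |c_0|`; together with Perron's condition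
`|c_m| ≥ F + 2` this forces `|w| > F + 1`. Comparing coefficients in `f = (X - w) q` gives
`(|w| - 1) (|q_{m-1}| + ⋯ + |q_0|) ≤ F < |w| - 1`, so the lower coefficients of the monic `q`
have ℓ¹-norm below `1` and every root of `q` lies in the open unit disc. Thus `f` has at most
one root outside the open unit disc, counted with multiplicity. A monic integer factor with
nonzero constant term has a root there, since the product of its roots is a nonzero integer;
so `f` has no two nonconstant monic factors.
-/

open Polynomial

/-- The polynomial `p(x) = x^n + a_{n-1} x^{n-1} + ⋯ + a_2 x^2 + a_1 x + (-1)^{n+1}`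
with integer coefficients. -/
noncomputable def pisotPoly (n : ℕ) (a : ℕ → ℤ) : Polynomial ℤ :=
  X ^ n + ∑ i ∈ Finset.Ico 1 n, C (a i) * X ^ i + C ((-1 : ℤ) ^ (n + 1))

open Finset

lemma norm_mul_norm_sum_range_le {K : Type*} [NormedField K] {z : K} (hz : 1 ≤ ‖z‖)
    (c : ℕ → K) (m : ℕ) :
    ‖z‖ * ‖∑ j ∈ range m, c j * z ^ j‖ ≤ (∑ j ∈ range m, ‖c j‖) * ‖z‖ ^ m := by
  calc ‖z‖ * ‖∑ j ∈ range m, c j * z ^ j‖ ≤ ‖z‖ * ∑ j ∈ range m, ‖c j‖ * ‖z‖ ^ j := by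
        gcongr
        exact (norm_sum_le _ _).trans_eq (by simp only [norm_mul, norm_pow])
    _ = ∑ j ∈ range m, ‖c j‖ * ‖z‖ ^ (j + 1) := by rw [mul_sum]; congr! 1; ring
    _ ≤ ∑ j ∈ range m, ‖c j‖ * ‖z‖ ^ m :=
        sum_le_sum fun j hj ↦
          mul_le_mul_of_nonneg_left (pow_le_pow_right₀ hz (mem_range.mp hj)) (norm_nonneg _)
    _ = _ := (sum_mul ..).symm

namespace Polynomial

lemma Monic.eval_eq_of_natDegree_eq_succ {R : Type*} [CommSemiring R] {f : R[X]} {m : ℕ}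
    (hf : f.Monic) (hdeg : f.natDegree = m + 1) (w : R) :
    f.eval w = w ^ m * (w + f.coeff m) + ∑ j ∈ range m, f.coeff j * w ^ j := by
  have hlead : f.coeff (m + 1) = 1 := hdeg ▸ hf.coeff_natDegree
  rw [eval_eq_sum_range, hdeg, sum_range_succ, sum_range_succ, hlead]
  ring

section NormedField

variable {K : Type*} [NormedField K]

lemma Monic.norm_lt_one_of_isRoot {q : K[X]} (hq : q.Monic)
    (hsmall : ∑ j ∈ range q.natDegree, ‖q.coeff j‖ < 1) {z : K} (hz : q.IsRoot z) :
    ‖z‖ < 1 := by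
  by_contra! hz1
  have hroot : z ^ q.natDegree = -∑ j ∈ range q.natDegree, q.coeff j * z ^ j := by
    have := hz.eq_zero
    rw [eval_eq_sum_range, sum_range_succ, hq.coeff_natDegree, one_mul] at this
    linear_combination this
  have h := norm_mul_norm_sum_range_le hz1 q.coeff q.natDegree
  rw [← norm_neg (∑ j ∈ _, _), ← hroot, norm_pow] at h
  have hpos : 0 < ‖z‖ ^ q.natDegree := by positivity
  nlinarith

lemma norm_sub_one_mul_sum_norm_coeff_le (w : K) (q : K[X]) (m : ℕ) :
    (‖w‖ - 1) * ∑ j ∈ range m, ‖q.coeff j‖ ≤ ∑ j ∈ range m, ‖((X - C w) * q).coeff j‖ := by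
  have hshift : ∑ j ∈ range m, ‖(X * q).coeff j‖ ≤ ∑ j ∈ range m, ‖q.coeff j‖ :=
    calc ∑ j ∈ range m, ‖(X * q).coeff j‖ ≤ ∑ j ∈ range (m + 1), ‖(X * q).coeff j‖ :=
          sum_le_sum_of_subset_of_nonneg (range_subset_range.2 m.le_succ)
            fun _ _ _ ↦ norm_nonneg _
      _ = ∑ j ∈ range m, ‖q.coeff j‖ := by simp [sum_range_succ', coeff_X_mul]
  have hterm (j : ℕ) :
      ‖w‖ * ‖q.coeff j‖ ≤ ‖(X * q).coeff j‖ + ‖((X - C w) * q).coeff j‖ :=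
    calc ‖w‖ * ‖q.coeff j‖ = ‖(X * q).coeff j - ((X - C w) * q).coeff j‖ := by
          rw [← norm_mul, sub_mul, coeff_sub, coeff_C_mul, sub_sub_cancel]
      _ ≤ _ := norm_sub_le _ _
  have hsum := sum_le_sum fun j (_ : j ∈ range m) ↦ hterm j
  rw [← mul_sum, sum_add_distrib] at hsum
  linarith

variable {f : K[X]} {m : ℕ}

lemma Monic.lt_norm_of_isRoot (hf : f.Monic) (hdeg : f.natDegree = m + 1)
    (hperron : ∑ j ∈ range m, ‖f.coeff j‖ + 2 ≤ ‖f.coeff m‖) {w : K} (hw : f.IsRoot w)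
    (hw1 : 1 ≤ ‖w‖) : ∑ j ∈ range m, ‖f.coeff j‖ + 1 < ‖w‖ := by
  set F := ∑ j ∈ range m, ‖f.coeff j‖
  have hroot : w ^ m * (w + f.coeff m) = -∑ j ∈ range m, f.coeff j * w ^ j := by
    have := hw.eq_zero
    rw [hf.eval_eq_of_natDegree_eq_succ hdeg] at this
    linear_combination this
  have hnear : ‖w‖ * ‖w + f.coeff m‖ ≤ F := by
    have h := norm_mul_norm_sum_range_le hw1 f.coeff m
    rw [← norm_neg (∑ j ∈ _, _), ← hroot, norm_mul, norm_pow] at h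
    have hpos : 0 < ‖w‖ ^ m := by positivity
    nlinarith
  have htri : ‖f.coeff m‖ ≤ ‖w + f.coeff m‖ + ‖w‖ := by
    simpa using norm_sub_le (w + f.coeff m) w
  by_contra! hw2
  nlinarith [mul_nonneg (sub_nonneg.2 hw1) (sub_nonneg.2 hw2)]

lemma Monic.not_mul_X_sub_C_dvd (hf : f.Monic) (hdeg : f.natDegree = m + 1)
    (hperron : ∑ j ∈ range m, ‖f.coeff j‖ + 2 ≤ ‖f.coeff m‖) {z w : K} (hz : 1 ≤ ‖z‖)
    (hw : 1 ≤ ‖w‖) : ¬ (X - C z) * (X - C w) ∣ f := by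
  rintro ⟨r, hr⟩
  set q := (X - C z) * r
  have hfq : f = (X - C w) * q := by rw [hr]; ring
  have hq : q.Monic := (monic_X_sub_C w).of_mul_monic_left (hfq ▸ hf)
  have hqdeg : q.natDegree = m := by
    have := (monic_X_sub_C w).natDegree_mul hq
    rw [← hfq, hdeg, natDegree_X_sub_C] at this
    omega
  have hbig := hf.lt_norm_of_isRoot hdeg hperron (by simp [hfq]) hw
  have hsmall : ∑ j ∈ range q.natDegree, ‖q.coeff j‖ < 1 := by
    have := norm_sub_one_mul_sum_norm_coeff_le w q m
    rw [← hfq] at this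
    rw [hqdeg]
    by_contra! hT
    nlinarith
  exact (hq.norm_lt_one_of_isRoot hsmall (by simp [q])).not_ge hz

lemma Monic.exists_isRoot_one_le_norm [IsAlgClosed K] {g : K[X]} (hg : g.Monic)
    (hdeg : g.natDegree ≠ 0) (h0 : 1 ≤ ‖g.coeff 0‖) : ∃ z, g.IsRoot z ∧ 1 ≤ ‖z‖ := by
  by_contra! hsmall
  have hsplit := IsAlgClosed.splits g
  have hroots : g.roots ≠ 0 := by
    rwa [← Multiset.card_pos, ← hsplit.natDegree_eq_card_roots, pos_iff_ne_zero]
  have hpos (z : K) (hz : z ∈ g.roots) : 0 < ‖z‖ := by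
    refine norm_pos_iff.2 fun hz0 ↦ ?_
    have := (isRoot_of_mem_roots hz).eq_zero
    rw [hz0, ← coeff_zero_eq_eval_zero] at this
    norm_num [this] at h0
  have : ‖g.coeff 0‖ < 1 :=
    calc ‖g.coeff 0‖ = (g.roots.map (‖·‖)).prod := by
          rw [hsplit.coeff_zero_eq_prod_roots_of_monic hg, norm_mul, norm_pow, norm_neg,
            norm_one, one_pow, one_mul]
          exact map_multiset_prod (normHom : K →*₀ ℝ) _
      _ < (g.roots.map fun _ ↦ (1 : ℝ)).prod :=
          Multiset.prod_map_lt_prod_map hroots _ _ hpos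
            fun z hz ↦ hsmall z (isRoot_of_mem_roots hz)
      _ = 1 := by simp
  linarith

end NormedField

lemma Monic.exists_isRoot_map_complex_one_le_norm {g : ℤ[X]} (hg : g.Monic) (hdeg : g.natDegree ≠ 0)
    (h0 : g.coeff 0 ≠ 0) : ∃ z : ℂ, (g.map (Int.castRingHom ℂ)).IsRoot z ∧ 1 ≤ ‖z‖ :=
  (hg.map _).exists_isRoot_one_le_norm (by rwa [hg.natDegree_map])
    (by simpa [Complex.norm_intCast] using (Int.cast_le (R := ℝ)).2 (Int.one_le_abs h0))

theorem Monic.irreducible_map_rat_of_perron {f : ℤ[X]} {m : ℕ} (hf : f.Monic)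
    (hdeg : f.natDegree = m + 1) (h0 : f.coeff 0 ≠ 0)
    (hperron : ∑ j ∈ range m, |f.coeff j| + 1 < |f.coeff m|) :
    Irreducible (f.map (Int.castRingHom ℚ)) := by
  rw [← IsPrimitive.Int.irreducible_iff_irreducible_map_cast hf.isPrimitive,
    hf.irreducible_iff_natDegree]
  refine ⟨fun h1 ↦ by simp [h1] at hdeg, fun g h hg hh hgh ↦ ?_⟩
  by_contra! ⟨hg0, hh0⟩
  have hcoeff0 : g.coeff 0 * h.coeff 0 ≠ 0 := by rwa [← mul_coeff_zero, hgh]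
  obtain ⟨z, hz, hz1⟩ := hg.exists_isRoot_map_complex_one_le_norm hg0 (left_ne_zero_of_mul hcoeff0)
  obtain ⟨w, hw, hw1⟩ := hh.exists_isRoot_map_complex_one_le_norm hh0 (right_ne_zero_of_mul hcoeff0)
  have hperronℂ : ∑ j ∈ range m, ‖(f.map (Int.castRingHom ℂ)).coeff j‖ + 2 ≤
      ‖(f.map (Int.castRingHom ℂ)).coeff m‖ := by
    simp only [coeff_map, eq_intCast, Complex.norm_intCast]
    exact_mod_cast (by linarith : ∑ j ∈ range m, |f.coeff j| + 2 ≤ |f.coeff m|)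
  refine (hf.map _).not_mul_X_sub_C_dvd (by rw [hf.natDegree_map, hdeg]) hperronℂ hz1 hw1 ?_
  rw [← hgh, Polynomial.map_mul]
  exact mul_dvd_mul (dvd_iff_isRoot.2 hz) (dvd_iff_isRoot.2 hw)

end Polynomial

section pisotPoly

variable {n : ℕ} (a : ℕ → ℤ)

lemma coeff_pisotPoly_of_mem_Ico {j : ℕ} (hj : j ∈ Ico 1 n) : (pisotPoly n a).coeff j = a j := by
  obtain ⟨h1, hn⟩ := mem_Ico.1 hj
  simp only [pisotPoly, coeff_add, coeff_X_pow, finsetSum_coeff, coeff_C_mul_X_pow, coeff_C]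
  simp [hn.ne, hj, Nat.one_le_iff_ne_zero.1 h1]

lemma coeff_pisotPoly_zero (hn : n ≠ 0) : (pisotPoly n a).coeff 0 = (-1) ^ (n + 1) := by
  simp only [pisotPoly, coeff_add, coeff_X_pow, finsetSum_coeff, coeff_C_mul_X_pow, coeff_C]
  simp [Ne.symm hn]

lemma degree_pisotPoly_sub_X_pow_lt (hn : n ≠ 0) :
    (pisotPoly n a - X ^ n).degree < (n : WithBot ℕ) := by
  rw [pisotPoly, add_assoc, add_sub_cancel_left, ← mem_degreeLT]
  refine add_mem (sum_mem fun i hi ↦ mem_degreeLT.2 ?_) (mem_degreeLT.2 ?_)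
  · exact (degree_C_mul_X_pow_le _ _).trans_lt (by exact_mod_cast (mem_Ico.1 hi).2)
  · exact degree_C_le.trans_lt (by exact_mod_cast Nat.pos_of_ne_zero hn)

lemma monic_pisotPoly (hn : n ≠ 0) : (pisotPoly n a).Monic := by
  simpa using monic_X_pow_add (degree_pisotPoly_sub_X_pow_lt a hn)

lemma natDegree_pisotPoly (hn : n ≠ 0) : (pisotPoly n a).natDegree = n := by
  have := natDegree_add_eq_left_of_degree_lt (p := X ^ n) (q := pisotPoly n a - X ^ n)
    (by rw [degree_X_pow]; exact degree_pisotPoly_sub_X_pow_lt a hn)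
  rwa [add_sub_cancel, natDegree_X_pow] at this

end pisotPoly

/-- If `|a_{n-1}| > |a_{n-2}| + ⋯ + |a_1| + 2` then `p` is irreducible over `ℚ`. -/
theorem pisotPoly_irreducible (n : ℕ) (hn : 1 < n) (a : ℕ → ℤ)
    (ha : (∑ i ∈ Finset.Ico 1 (n - 1), |a i|) + 2 < |a (n - 1)|) :
    Irreducible ((pisotPoly n a).map (Int.castRingHom ℚ)) := by
  obtain ⟨m, rfl⟩ : ∃ m, n = m + 1 := ⟨n - 1, by omega⟩
  have hm : 0 < m := by omega
  rw [Nat.add_sub_cancel] at ha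
  have hsum : ∑ j ∈ range m, |(pisotPoly (m + 1) a).coeff j| = 1 + ∑ i ∈ Ico 1 m, |a i| := by
    rw [range_eq_Ico, sum_eq_sum_Ico_succ_bot hm, coeff_pisotPoly_zero a m.succ_ne_zero]
    refine congrArg₂ _ (by simp) (sum_congr rfl fun j hj ↦ ?_)
    rw [coeff_pisotPoly_of_mem_Ico a (Ico_subset_Ico_right m.le_succ hj)]
  refine (monic_pisotPoly a m.succ_ne_zero).irreducible_map_rat_of_perron
    (natDegree_pisotPoly a m.succ_ne_zero) (by simp [coeff_pisotPoly_zero]) ?_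
  rw [hsum, coeff_pisotPoly_of_mem_Ico a (mem_Ico.2 ⟨hm, m.lt_succ_self⟩)]
  linarith
end
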